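/- arXiv:1705.00498 — 2 statements merged into one kernel-verified Lean document; each statement's English description precedes it below -/
import Mathlib

section
/- Define g : ℝ → ℝ by g(u) = 4·arctan(exp(u)). Then g is twice differentiable and g''(u) = sin(g(u)) for all u ∈ ℝ. -/
/-!
Writing `x = eᵘ`, the double-angle formula `sin (2 arctan x) = 2x / (1 + x²)` shows that
`g(u) = 4 arctan (eᵘ)` solves the first-order pendulum equation `g' = 2 sin (g / 2)`.
Differentiating once more gives `g'' = cos (g / 2) · g' = 2 sin (g / 2) cos (g / 2) = sin g`.
-/

open Real

theorem Real.sin_two_mul_arctan (x : ℝ) : sin (2 * arctan x) = 2 * x / (1 + x ^ 2) := by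
  have hsq : √(1 + x ^ 2) ^ 2 = 1 + x ^ 2 := sq_sqrt (by positivity)
  rw [sin_two_mul, sin_arctan, cos_arctan]
  field_simp
  rw [hsq]

theorem hasDerivAt_deriv_of_hasDerivAt_two_mul_sin_half {g : ℝ → ℝ}
    (hg : ∀ u, HasDerivAt g (2 * sin (g u / 2)) u) (u : ℝ) :
    HasDerivAt (deriv g) (sin (g u)) u := by
  have hderiv : deriv g = fun v => 2 * sin (g v / 2) := funext fun v => (hg v).deriv
  rw [hderiv]
  refine (((hg u).div_const 2).sin.const_mul 2).congr_deriv ?_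
  rw [← mul_div_cancel₀ (g u) (two_ne_zero' ℝ), sin_two_mul, mul_div_cancel_left₀ _ two_ne_zero]
  ring

theorem hasDerivAt_four_mul_arctan_exp (u : ℝ) :
    HasDerivAt (fun u => 4 * arctan (exp u)) (2 * sin (4 * arctan (exp u) / 2)) u := by
  refine (((hasDerivAt_arctan (exp u)).comp u (hasDerivAt_exp u)).const_mul 4).congr_deriv ?_
  rw [show 4 * arctan (exp u) / 2 = 2 * arctan (exp u) by ring, sin_two_mul_arctan]
  ring

/-- The sine-Gordon kink profile `g(u) = 4 arctan(eᵘ)` is twice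
differentiable and satisfies `g''(u) = sin(g(u))`. -/
theorem kink_profile_second_derivative :
    (Differentiable ℝ (fun u : ℝ => 4 * Real.arctan (Real.exp u))) ∧
    (Differentiable ℝ (deriv (fun u : ℝ => 4 * Real.arctan (Real.exp u)))) ∧
    ∀ u : ℝ, deriv (deriv (fun u : ℝ => 4 * Real.arctan (Real.exp u))) u =
      Real.sin (4 * Real.arctan (Real.exp u)) := by
  have hg' := hasDerivAt_four_mul_arctan_exp
  have hg'' := hasDerivAt_deriv_of_hasDerivAt_two_mul_sin_half hg'
  exact ⟨fun u => (hg' u).differentiableAt, fun u => (hg'' u).differentiableAt,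
    fun u => (hg'' u).deriv⟩
end

section
/- Let A be a real symmetric n×n matrix and Δt ∈ ℝ. Define the Störmer–Verlet one-step map S : ℝⁿ × ℝⁿ → ℝⁿ × ℝⁿ for the Hamiltonian H(q, p) = ½pᵀp + ½qᵀAq by q₁ = q + Δt·p − (Δt²/2)·A q and p₁ = p − (Δt/2)·A(q + q₁). Then S is a linear map whose (2n)×(2n) matrix M satisfies Mᵀ 𝕁₂ₙ M = 𝕁₂ₙ, where 𝕁₂ₙ = [[0, Iₙ], [−Iₙ, 0]]; i.e., the Störmer–Verlet scheme applied to a quadratic Hamiltonian is a symplectic map. -/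
open Matrix

/-- The Störmer–Verlet one-step map for the quadratic Hamiltonian
`H(q,p) = ½pᵀp + ½qᵀAq` (with `A` symmetric), given by
`q₁ = q + Δt p − (Δt²/2)Aq` and `p₁ = p − (Δt/2)A(q + q₁)`, is a linear map;
there is a matrix `M` representing it, and any matrix `M` representing it
satisfies `Mᵀ 𝕁 M = 𝕁` with `𝕁 = [[0, I], [−I, 0]]`: the scheme is
symplectic. -/
theorem stormer_verlet_symplectic
    (n : ℕ) (A : Matrix (Fin n) (Fin n) ℝ) (hA : Aᵀ = A) (Δt : ℝ)
    (q₁ p₁ : (Fin n → ℝ) → (Fin n → ℝ) → Fin n → ℝ)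
    (hq₁ : ∀ q p, q₁ q p = q + Δt • p - (Δt ^ 2 / 2) • A.mulVec q)
    (hp₁ : ∀ q p, p₁ q p = p - (Δt / 2) • A.mulVec (q + q₁ q p)) :
    (∃ M : Matrix (Fin n ⊕ Fin n) (Fin n ⊕ Fin n) ℝ,
      ∀ q p, M.mulVec (Sum.elim q p) = Sum.elim (q₁ q p) (p₁ q p)) ∧
    ∀ M : Matrix (Fin n ⊕ Fin n) (Fin n ⊕ Fin n) ℝ,
      (∀ q p, M.mulVec (Sum.elim q p) = Sum.elim (q₁ q p) (p₁ q p)) →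
      Mᵀ * (fromBlocks 0 1 (-1) 0) * M = fromBlocks 0 1 (-1) 0 := by
  set P : Matrix (Fin n) (Fin n) ℝ := 1 - (Δt ^ 2 / 2) • A with hP
  set C : Matrix (Fin n) (Fin n) ℝ := (Δt ^ 3 / 4) • (A * A) - Δt • A with hC
  set M₀ : Matrix (Fin n ⊕ Fin n) (Fin n ⊕ Fin n) ℝ :=
    fromBlocks P (Δt • 1) C P with hM₀
  have hrep : ∀ q p, M₀.mulVec (Sum.elim q p) = Sum.elim (q₁ q p) (p₁ q p) := by
    intro q p
    rw [hM₀, Matrix.fromBlocks_mulVec]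
    rw [hp₁, hq₁]
    simp only [Sum.elim_comp_inl, Sum.elim_comp_inr]
    refine congrArg₂ Sum.elim ?_ ?_
    · simp only [hP, Matrix.sub_mulVec, Matrix.smul_mulVec, Matrix.one_mulVec]
      module
    · simp only [hP, hC, Matrix.sub_mulVec, Matrix.smul_mulVec, Matrix.one_mulVec,
        Matrix.mulVec_add, Matrix.mulVec_sub, Matrix.mulVec_smul, ← Matrix.mulVec_mulVec]
      module
  refine ⟨⟨M₀, hrep⟩, ?_⟩
  intro M hM
  have hMeq : M = M₀ := by
    apply Matrix.toLin'.injective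
    apply LinearMap.ext
    intro v
    have h1 := hM (v ∘ Sum.inl) (v ∘ Sum.inr)
    have h2 := hrep (v ∘ Sum.inl) (v ∘ Sum.inr)
    simp only [Sum.elim_comp_inl_inr] at h1 h2
    simp [Matrix.toLin'_apply, h1, h2]
  subst hMeq
  have hPT : Pᵀ = P := by
    simp [hP, transpose_sub, transpose_smul, hA]
  have hCT : Cᵀ = C := by
    simp [hC, transpose_sub, transpose_smul, transpose_mul, hA]
  have hsmul : ((Δt • 1 : Matrix (Fin n) (Fin n) ℝ))ᵀ = Δt • 1 := by simp
  rw [hM₀, Matrix.fromBlocks_transpose, hPT, hCT, hsmul,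
    Matrix.fromBlocks_multiply, Matrix.fromBlocks_multiply]
  have e1 : (P * 0 + C * -1) * P + (P * 1 + C * 0) * C = 0 := by
    simp only [Matrix.mul_zero, Matrix.mul_one, mul_neg_one, zero_add, add_zero,
      Matrix.neg_mul]
    simp only [hP, hC, Matrix.mul_sub, Matrix.sub_mul, Matrix.one_mul, Matrix.mul_one,
      smul_mul_assoc, mul_smul_comm, mul_assoc, smul_smul, neg_sub, neg_neg]
    module
  have e2 : (P * 0 + C * -1) * (Δt • 1) + (P * 1 + C * 0) * P = 1 := by
    simp only [Matrix.mul_zero, Matrix.mul_one, mul_neg_one, zero_add, add_zero,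
      Matrix.neg_mul]
    simp only [hP, hC, Matrix.mul_sub, Matrix.sub_mul, Matrix.one_mul, Matrix.mul_one,
      smul_mul_assoc, mul_smul_comm, mul_assoc, smul_smul, neg_sub, neg_neg]
    match_scalars <;> ring
  have e3 : (Δt • 1 * 0 + P * -1) * P + (Δt • 1 * 1 + P * 0) * C = -1 := by
    simp only [Matrix.mul_zero, Matrix.mul_one, mul_neg_one, zero_add, add_zero,
      Matrix.neg_mul]
    simp only [hP, hC, Matrix.mul_sub, Matrix.sub_mul, Matrix.one_mul, Matrix.mul_one,
      smul_mul_assoc, mul_smul_comm, mul_assoc, smul_smul, neg_sub, neg_neg]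
    match_scalars <;> ring
  have e4 : (Δt • 1 * 0 + P * -1) * (Δt • 1) + (Δt • 1 * 1 + P * 0) * P = 0 := by
    simp only [Matrix.mul_zero, Matrix.mul_one, mul_neg_one, zero_add, add_zero,
      Matrix.neg_mul]
    simp only [hP, hC, Matrix.mul_sub, Matrix.sub_mul, Matrix.one_mul, Matrix.mul_one,
      smul_mul_assoc, mul_smul_comm, mul_assoc, smul_smul, neg_sub, neg_neg]
    module
  rw [e1, e2, e3, e4]
end
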